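/- arXiv:1806.10179 — 5 statements merged into one kernel-verified Lean document; each statement's English description precedes it below -/
import Mathlib

section
/- Let H be a real inner product space, let N ≥ 1, and for each t ∈ {1,…,N} let φ_t ∈ H with ‖φ_t‖ ≤ 1 and y_t ∈ {−1, +1}. Let λ > 0, define the instantaneous objective P_t(w) = (λ/2)‖w‖² + max(0, 1 − y_t⟨w, φ_t⟩), the batch objective P(w) = (λ/2)‖w‖² + (1/N)∑_{t=1}^N max(0, 1 − y_t⟨w, φ_t⟩), and the learning rate η_t = 1/(λt). Let the BSGD iterates be w_1 = 0 and w_{t+1} = w_t − η_t g_t + η_t E_t, where g_t = λw_t − (y_t φ_t if y_t⟨w_t, φ_t⟩ < 1, else 0) and E_t ∈ H is the gradient error. Assume ‖E_t‖ ≤ 1 for all t, set Ē = (1/N)∑_{t=1}^N ‖E_t‖, and set U = 2/λ if λ ≤ 4 and U = 1/√λ otherwise. Then for any minimizer w* of P, (1/N)∑_{t=1}^N P_t(w_t) − (1/N)∑_{t=1}^N P_t(w*) ≤ (λU + 2)²(ln N + 1)/(2λN) + 2U·Ē. -/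
/-!
Regularized hinge losses are `λ`-strongly convex: `P_t w - P_t v ≤ ⟪g, w - v⟫ - λ/2 ‖w - v‖²`
for the canonical subgradient `g`. Expanding `‖w_{t+1} - w*‖²` along the perturbed step
`w_{t+1} = w_t - η_t (g_t - E_t)` with `η_t = 1/(λt)` bounds the regret at step `t` by the
telescoping term `λ/2 ((t-1)‖w_t - w*‖² - t ‖w_{t+1} - w*‖²)` plus `η_t ‖g_t - E_t‖² / 2` and
`⟪E_t, w_t - w*⟫`. Both remainders are controlled by `U = max (2/λ) (1/√λ)`: the iterates are
running averages of vectors of norm `≤ 2/λ`, and comparing `P w*` with `P (c w*)` shows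
`λ ‖w*‖² ≤ 1`. Summing, with `∑ 1/t ≤ log N + 1`, gives the bound.
-/

open scoped RealInnerProductSpace

open Finset

lemma convexOn_sum {𝕜 E β ι : Type*} [Semiring 𝕜] [PartialOrder 𝕜] [AddCommMonoid E]
    [AddCommMonoid β] [PartialOrder β] [IsOrderedAddMonoid β] [SMul 𝕜 E] [Module 𝕜 β]
    {s : Set E} (hs : Convex 𝕜 s) {t : Finset ι} {f : ι → E → β}
    (hf : ∀ i ∈ t, ConvexOn 𝕜 s (f i)) : ConvexOn 𝕜 s fun x => ∑ i ∈ t, f i x := by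
  rw [← Finset.sum_fn]
  exact Finset.sum_induction f (ConvexOn 𝕜 s) (fun _ _ => ConvexOn.add) (convexOn_const 0 hs) hf

lemma sum_Icc_inv_le_log_add_one (N : ℕ) :
    ∑ t ∈ Icc 1 N, (1 : ℝ) / t ≤ Real.log N + 1 := by
  simpa [harmonic_eq_sum_Icc, add_comm] using harmonic_le_one_add_log N

lemma sum_Icc_telescope (a : ℕ → ℝ) (N : ℕ) :
    ∑ t ∈ Icc 1 N, (((t : ℝ) - 1) * a t - t * a (t + 1)) = -(N * a (N + 1)) := by
  induction N with
  | zero => simp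
  | succ N ih =>
    rw [Finset.sum_Icc_succ_top (Nat.le_add_left 1 N), ih]
    push_cast
    ring

lemma sum_le_of_telescoping_bound {N : ℕ} {lam C : ℝ} (hlam : 0 ≤ lam) (hC : 0 ≤ C)
    {r a D : ℕ → ℝ} (ha : 0 ≤ a (N + 1))
    (hr : ∀ t ∈ Icc 1 N, r t ≤ lam / 2 * ((t - 1) * a t - t * a (t + 1)) + C * (1 / t) + D t) :
    ∑ t ∈ Icc 1 N, r t ≤ C * (Real.log N + 1) + ∑ t ∈ Icc 1 N, D t := calc
  ∑ t ∈ Icc 1 N, r t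
    ≤ ∑ t ∈ Icc 1 N, (lam / 2 * ((t - 1) * a t - t * a (t + 1)) + C * (1 / t) + D t) :=
      sum_le_sum hr
  _ = lam / 2 * -(N * a (N + 1)) + C * ∑ t ∈ Icc 1 N, (1 : ℝ) / t + ∑ t ∈ Icc 1 N, D t := by
      rw [sum_add_distrib, sum_add_distrib, ← mul_sum, ← mul_sum, sum_Icc_telescope]
  _ ≤ 0 + C * (Real.log N + 1) + ∑ t ∈ Icc 1 N, D t := by
      gcongr
      · have : 0 ≤ (N : ℝ) * a (N + 1) := by positivity
        nlinarith
      · exact sum_Icc_inv_le_log_add_one N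
  _ = C * (Real.log N + 1) + ∑ t ∈ Icc 1 N, D t := by ring

lemma ite_le_four_eq_max {lam : ℝ} (hlam : 0 < lam) :
    (if lam ≤ 4 then 2 / lam else 1 / Real.sqrt lam) = max (2 / lam) (1 / Real.sqrt lam) := by
  rw [← Real.sqrt_div_self', max_div_div_right hlam.le]
  split_ifs with h
  · rw [max_eq_left (Real.sqrt_le_iff.2 ⟨by norm_num, by linarith⟩)]
  · rw [max_eq_right ((Real.le_sqrt' two_pos).2 (by linarith))]

section InnerProductSpace

variable {H : Type*} [NormedAddCommGroup H] [InnerProductSpace ℝ H]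

noncomputable def regHinge (lam y : ℝ) (φ v : H) : ℝ :=
  lam / 2 * ‖v‖ ^ 2 + max 0 (1 - y * ⟪v, φ⟫)

noncomputable def negHingeSubgrad (y : ℝ) (φ u : H) : H :=
  if y * ⟪u, φ⟫ < 1 then y • φ else 0

lemma norm_negHingeSubgrad_le_one {y : ℝ} {φ : H} (hy : |y| ≤ 1) (hφ : ‖φ‖ ≤ 1) (u : H) :
    ‖negHingeSubgrad y φ u‖ ≤ 1 := by
  unfold negHingeSubgrad
  split_ifs
  · rw [norm_smul, Real.norm_eq_abs]
    exact mul_le_one₀ hy (norm_nonneg _) hφ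
  · simp

lemma convexOn_hinge (y : ℝ) (φ : H) :
    ConvexOn ℝ Set.univ fun v : H => max 0 (1 - y * ⟪v, φ⟫) := by
  refine ⟨convex_univ, fun u _ v _ a b ha hb hab => ?_⟩
  have haff : 1 - y * ⟪a • u + b • v, φ⟫ = a * (1 - y * ⟪u, φ⟫) + b * (1 - y * ⟪v, φ⟫) := by
    rw [inner_add_left, real_inner_smul_left, real_inner_smul_left]
    linear_combination -hab
  dsimp only
  rw [haff, smul_eq_mul, smul_eq_mul]
  exact max_le (by positivity) (by gcongr <;> exact le_max_right _ _)

lemma regHinge_sub_le (lam y : ℝ) (φ u v : H) :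
    regHinge lam y φ u - regHinge lam y φ v
      ≤ ⟪lam • u - negHingeSubgrad y φ u, u - v⟫ - lam / 2 * ‖u - v‖ ^ 2 := by
  have hquad : lam / 2 * ‖u‖ ^ 2 - lam / 2 * ‖v‖ ^ 2
      = ⟪lam • u, u - v⟫ - lam / 2 * ‖u - v‖ ^ 2 := by
    rw [norm_sub_sq_real, real_inner_smul_left, inner_sub_right, real_inner_self_eq_norm_sq]
    ring
  have hhinge : max 0 (1 - y * ⟪u, φ⟫) - max 0 (1 - y * ⟪v, φ⟫)
      ≤ -⟪negHingeSubgrad y φ u, u - v⟫ := by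
    unfold negHingeSubgrad
    split_ifs with h
    · rw [real_inner_smul_left, inner_sub_right, real_inner_comm u φ, real_inner_comm v φ,
        max_eq_right (by linarith)]
      linarith [le_max_right 0 (1 - y * ⟪v, φ⟫)]
    · rw [inner_zero_left, max_eq_left (by linarith)]
      linarith [le_max_left 0 (1 - y * ⟪v, φ⟫)]
  rw [regHinge, regHinge, inner_sub_left]
  linarith

lemma inner_eq_of_perturbed_step {η : ℝ} (hη : η ≠ 0) {u u' v g e : H}
    (hu' : u' = u - η • g + η • e) :
    ⟪g, u - v⟫ = (‖u - v‖ ^ 2 - ‖u' - v‖ ^ 2) / (2 * η) + η / 2 * ‖g - e‖ ^ 2 + ⟪e, u - v⟫ := by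
  have hdist : u' - v = (u - v) - η • (g - e) := by rw [hu', smul_sub]; abel
  rw [hdist, norm_sub_sq_real (u - v), real_inner_smul_right, norm_smul, mul_pow,
    Real.norm_eq_abs, sq_abs, inner_sub_right (u - v), real_inner_comm g (u - v),
    real_inner_comm e (u - v)]
  field_simp
  ring

lemma bsgd_step_le {lam t U : ℝ} (hlam : 0 < lam) (ht : 0 < t) (y : ℝ) (φ : H) {u u' v e : H}
    (hu : ‖u‖ ≤ U) (hv : ‖v‖ ≤ U) (hb : ‖negHingeSubgrad y φ u‖ ≤ 1) (he : ‖e‖ ≤ 1)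
    (hu' : u' = u - (1 / (lam * t)) • (lam • u - negHingeSubgrad y φ u) + (1 / (lam * t)) • e) :
    regHinge lam y φ u - regHinge lam y φ v
      ≤ lam / 2 * ((t - 1) * ‖u - v‖ ^ 2 - t * ‖u' - v‖ ^ 2)
        + (lam * U + 2) ^ 2 / (2 * lam) * (1 / t) + 2 * U * ‖e‖ := by
  set g := lam • u - negHingeSubgrad y φ u
  have hg : ‖g - e‖ ≤ lam * U + 2 := calc
    ‖g - e‖ ≤ ‖lam • u‖ + ‖negHingeSubgrad y φ u‖ + ‖e‖ :=
      norm_sub_le_of_le (norm_sub_le _ _) le_rfl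
    _ ≤ lam * U + 1 + 1 := by rw [norm_smul, Real.norm_of_nonneg hlam.le]; gcongr
    _ = lam * U + 2 := by ring
  have he' : ⟪e, u - v⟫ ≤ 2 * U * ‖e‖ := calc
    ⟪e, u - v⟫ ≤ ‖e‖ * ‖u - v‖ := real_inner_le_norm _ _
    _ ≤ ‖e‖ * (U + U) := by gcongr; exact norm_sub_le_of_le hu hv
    _ = 2 * U * ‖e‖ := by ring
  have hgsq : 1 / (lam * t) / 2 * ‖g - e‖ ^ 2 ≤ (lam * U + 2) ^ 2 / (2 * lam) * (1 / t) := calc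
    _ ≤ 1 / (lam * t) / 2 * (lam * U + 2) ^ 2 := by gcongr
    _ = (lam * U + 2) ^ 2 / (2 * lam) * (1 / t) := by field_simp
  have hdist : (‖u - v‖ ^ 2 - ‖u' - v‖ ^ 2) / (2 * (1 / (lam * t)))
      = lam * t / 2 * (‖u - v‖ ^ 2 - ‖u' - v‖ ^ 2) := by field_simp
  have hinner := inner_eq_of_perturbed_step (v := v) (by positivity) hu'
  rw [hdist] at hinner
  linarith [regHinge_sub_le lam y φ u v]

lemma mem_of_running_average {s : Set H} (hs : Convex ℝ s) {x z : ℕ → H} {n : ℕ}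
    (hx1 : x 1 ∈ s) (hz : ∀ t, 1 ≤ t → t ≤ n → z t ∈ s)
    (hx : ∀ t, 1 ≤ t → t ≤ n → x (t + 1) = (1 - 1 / (t : ℝ)) • x t + (1 / (t : ℝ)) • z t) :
    ∀ t, 1 ≤ t → t ≤ n + 1 → x t ∈ s := by
  intro t ht
  induction t, ht using Nat.le_induction with
  | base => exact fun _ => hx1
  | succ t ht ih =>
    intro htn
    have htn : t ≤ n := by omega
    have ht1 : 1 ≤ (t : ℝ) := by exact_mod_cast ht
    rw [hx t ht htn]
    exact hs (ih (by omega)) (hz t ht htn) (sub_nonneg.2 (div_le_one_of_le₀ ht1 (by positivity)))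
      (by positivity) (by ring)

lemma norm_bsgd_iterate_le {lam : ℝ} (hlam : 0 < lam) {N : ℕ} {w b E : ℕ → H} (hw1 : w 1 = 0)
    (hb : ∀ t, 1 ≤ t → t ≤ N → ‖b t‖ ≤ 1) (hE : ∀ t, 1 ≤ t → t ≤ N → ‖E t‖ ≤ 1)
    (hw : ∀ t, 1 ≤ t → t ≤ N →
      w (t + 1) = w t - (1 / (lam * t)) • (lam • w t - b t) + (1 / (lam * t)) • E t) :
    ∀ t, 1 ≤ t → t ≤ N + 1 → ‖w t‖ ≤ 2 / lam := by
  have hball := mem_of_running_average (convex_closedBall 0 (2 / lam)) (x := w)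
    (z := fun t => (1 / lam) • (b t + E t)) (n := N) (by simp [hw1]; positivity) ?_ ?_
  · exact fun t h1 h2 => mem_closedBall_zero_iff.1 (hball t h1 h2)
  · intro t h1 h2
    rw [mem_closedBall_zero_iff, norm_smul, Real.norm_of_nonneg (by positivity),
      one_div_mul_eq_div]
    gcongr
    exact (norm_add_le _ _).trans (by linarith [hb t h1 h2, hE t h1 h2])
  · intro t h1 h2
    have ht : (t : ℝ) ≠ 0 := by positivity
    rw [hw t h1 h2, smul_sub, smul_smul, show 1 / (lam * t) * lam = 1 / t by field_simp]
    module

lemma mul_sq_norm_le_sub_of_forall_le {L : H → ℝ} (hL : ConvexOn ℝ Set.univ L) {lam : ℝ}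
    {w : H} (hmin : ∀ v, lam / 2 * ‖w‖ ^ 2 + L w ≤ lam / 2 * ‖v‖ ^ 2 + L v) :
    lam * ‖w‖ ^ 2 ≤ L 0 - L w := by
  have hray : ∀ c : ℝ, 0 ≤ c → c < 1 → lam / 2 * ‖w‖ ^ 2 * (1 + c) ≤ L 0 - L w := by
    intro c hc0 hc1
    have hconv : L (c • w) ≤ c * L w + (1 - c) * L 0 := by
      simpa using hL.2 (Set.mem_univ w) (Set.mem_univ 0) hc0 (sub_nonneg.2 hc1.le)
        (add_sub_cancel c 1)
    have hcw := hmin (c • w)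
    rw [norm_smul, Real.norm_of_nonneg hc0, mul_pow] at hcw
    have : 0 < 1 - c := by linarith
    nlinarith
  -- Letting `c → 1` in `hray` gives the claim; concretely, `c = (L 0 - L w) / (lam * ‖w‖ ^ 2)`
  -- already contradicts the opposite inequality.
  by_contra! hlt
  have hD := hray 0 le_rfl one_pos
  have hpos : 0 < lam * ‖w‖ ^ 2 := by nlinarith [sq_nonneg ‖w‖]
  have := hray ((L 0 - L w) / (lam * ‖w‖ ^ 2)) (by apply div_nonneg <;> linarith)
    ((div_lt_one hpos).2 hlt)
  have hc := div_mul_cancel₀ (L 0 - L w) hpos.ne'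
  linarith

lemma norm_le_inv_sqrt_of_forall_le {N : ℕ} {y : ℕ → ℝ} {φ : ℕ → H} {lam : ℝ} (hlam : 0 < lam)
    {w : H} (hmin : ∀ v, lam / 2 * ‖w‖ ^ 2 + 1 / (N : ℝ) * ∑ t ∈ Icc 1 N, max 0 (1 - y t * ⟪w, φ t⟫)
      ≤ lam / 2 * ‖v‖ ^ 2 + 1 / (N : ℝ) * ∑ t ∈ Icc 1 N, max 0 (1 - y t * ⟪v, φ t⟫)) :
    ‖w‖ ≤ 1 / Real.sqrt lam := by
  set L : H → ℝ := fun v => 1 / (N : ℝ) * ∑ t ∈ Icc 1 N, max 0 (1 - y t * ⟪v, φ t⟫)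
  have hL : ConvexOn ℝ Set.univ L :=
    (convexOn_sum convex_univ fun t _ => convexOn_hinge (y t) (φ t)).smul (by positivity)
  have hL0 : L 0 ≤ 1 := by
    simp only [L, inner_zero_left, mul_zero, sub_zero, max_eq_right zero_le_one, sum_const,
      Nat.card_Icc, Nat.add_sub_cancel, nsmul_eq_mul, mul_one, one_div]
    exact inv_mul_le_one
  have hLw : 0 ≤ L w := by positivity
  have hw := mul_sq_norm_le_sub_of_forall_le hL hmin
  rw [one_div, ← Real.sqrt_inv, Real.le_sqrt (norm_nonneg _) (by positivity), ← one_div,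
    le_div_iff₀ hlam]
  linarith

end InnerProductSpace

theorem bsgd_regret_bound_general
    {H : Type*} [NormedAddCommGroup H] [InnerProductSpace ℝ H]
    (N : ℕ)
    (φ : ℕ → H) (y : ℕ → ℝ) (lam : ℝ) (hlam : 0 < lam)
    (hφ : ∀ t, 1 ≤ t → t ≤ N → ‖φ t‖ ≤ 1)
    (hy : ∀ t, 1 ≤ t → t ≤ N → y t = -1 ∨ y t = 1)
    (Pt : ℕ → H → ℝ)
    (hPt : ∀ t v, Pt t v = lam / 2 * ‖v‖ ^ 2 + max 0 (1 - y t * ⟪v, φ t⟫))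
    (P : H → ℝ)
    (hP : ∀ v, P v = lam / 2 * ‖v‖ ^ 2
        + (1 / (N : ℝ)) * ∑ t ∈ Finset.Icc 1 N, max 0 (1 - y t * ⟪v, φ t⟫))
    (η : ℕ → ℝ) (hη : ∀ t, η t = 1 / (lam * t))
    (w : ℕ → H) (E : ℕ → H) (g : ℕ → H)
    (hg : ∀ t, 1 ≤ t → t ≤ N →
        g t = lam • w t - (if y t * ⟪w t, φ t⟫ < 1 then y t • φ t else 0))
    (hw1 : w 1 = 0)
    (hwrec : ∀ t, 1 ≤ t → t ≤ N → w (t + 1) = w t - η t • g t + η t • E t)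
    (hE : ∀ t, 1 ≤ t → t ≤ N → ‖E t‖ ≤ 1)
    (Ebar : ℝ) (hEbar : Ebar = (1 / (N : ℝ)) * ∑ t ∈ Finset.Icc 1 N, ‖E t‖)
    (U : ℝ) (hU : U = if lam ≤ 4 then 2 / lam else 1 / Real.sqrt lam)
    (wstar : H) (hstar : ∀ v, P wstar ≤ P v) :
    (1 / (N : ℝ)) * ∑ t ∈ Finset.Icc 1 N, Pt t (w t)
      - (1 / (N : ℝ)) * ∑ t ∈ Finset.Icc 1 N, Pt t wstar
      ≤ (lam * U + 2) ^ 2 * (Real.log N + 1) / (2 * lam * N) + 2 * U * Ebar := by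
  rw [ite_le_four_eq_max hlam] at hU
  have hb : ∀ t, 1 ≤ t → t ≤ N → ∀ u, ‖negHingeSubgrad (y t) (φ t) u‖ ≤ 1 := fun t h1 h2 =>
    norm_negHingeSubgrad_le_one (by rcases hy t h1 h2 with h | h <;> simp [h]) (hφ t h1 h2)
  have hrec : ∀ t, 1 ≤ t → t ≤ N → w (t + 1) = w t
      - (1 / (lam * t)) • (lam • w t - negHingeSubgrad (y t) (φ t) (w t)) + (1 / (lam * t)) • E t :=
    fun t h1 h2 => by rw [hwrec t h1 h2, hg t h1 h2, hη]; rfl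
  have hwstar : ‖wstar‖ ≤ U := hU ▸ (norm_le_inv_sqrt_of_forall_le hlam
    fun v => by simpa only [hP] using hstar v).trans (le_max_right _ _)
  have hw : ∀ t, 1 ≤ t → t ≤ N → ‖w t‖ ≤ U := fun t h1 h2 => hU ▸
    (norm_bsgd_iterate_le hlam hw1 (fun t h1 h2 => hb t h1 h2 _) hE hrec t h1 (by omega)).trans
      (le_max_left _ _)
  have hstep : ∀ t ∈ Icc 1 N, Pt t (w t) - Pt t wstar
      ≤ lam / 2 * ((t - 1) * ‖w t - wstar‖ ^ 2 - t * ‖w (t + 1) - wstar‖ ^ 2)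
        + (lam * U + 2) ^ 2 / (2 * lam) * (1 / t) + 2 * U * ‖E t‖ := fun t ht => by
    obtain ⟨h1, h2⟩ := mem_Icc.1 ht
    rw [hPt, hPt]
    exact bsgd_step_le hlam (by positivity) (y t) (φ t) (hw t h1 h2) hwstar (hb t h1 h2 _)
      (hE t h1 h2) (hrec t h1 h2)
  have hsum := sum_le_of_telescoping_bound (a := fun t => ‖w t - wstar‖ ^ 2) hlam.le
    (by positivity) (by positivity) hstep
  rw [hEbar, ← mul_sub, ← sum_sub_distrib]
  calc 1 / (N : ℝ) * ∑ t ∈ Icc 1 N, (Pt t (w t) - Pt t wstar)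
      ≤ 1 / (N : ℝ) * ((lam * U + 2) ^ 2 / (2 * lam) * (Real.log N + 1)
          + ∑ t ∈ Icc 1 N, 2 * U * ‖E t‖) := by gcongr
    _ = (lam * U + 2) ^ 2 * (Real.log N + 1) / (2 * lam * N)
          + 2 * U * (1 / (N : ℝ) * ∑ t ∈ Icc 1 N, ‖E t‖) := by rw [← mul_sum]; ring

/-- Theorem 1 (BSGD regret bound with gradient error). -/
theorem bsgd_regret_bound
    {H : Type*} [NormedAddCommGroup H] [InnerProductSpace ℝ H]
    (N : ℕ) (hN : 1 ≤ N)
    (φ : ℕ → H) (y : ℕ → ℝ) (lam : ℝ) (hlam : 0 < lam)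
    (hφ : ∀ t, 1 ≤ t → t ≤ N → ‖φ t‖ ≤ 1)
    (hy : ∀ t, 1 ≤ t → t ≤ N → y t = -1 ∨ y t = 1)
    (Pt : ℕ → H → ℝ)
    (hPt : ∀ t v, Pt t v = lam / 2 * ‖v‖ ^ 2 + max 0 (1 - y t * ⟪v, φ t⟫))
    (P : H → ℝ)
    (hP : ∀ v, P v = lam / 2 * ‖v‖ ^ 2
        + (1 / (N : ℝ)) * ∑ t ∈ Finset.Icc 1 N, max 0 (1 - y t * ⟪v, φ t⟫))
    (η : ℕ → ℝ) (hη : ∀ t, η t = 1 / (lam * t))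
    (w : ℕ → H) (E : ℕ → H) (g : ℕ → H)
    (hg : ∀ t, 1 ≤ t → t ≤ N →
        g t = lam • w t - (if y t * ⟪w t, φ t⟫ < 1 then y t • φ t else 0))
    (hw1 : w 1 = 0)
    (hwrec : ∀ t, 1 ≤ t → t ≤ N → w (t + 1) = w t - η t • g t + η t • E t)
    (hE : ∀ t, 1 ≤ t → t ≤ N → ‖E t‖ ≤ 1)
    (Ebar : ℝ) (hEbar : Ebar = (1 / (N : ℝ)) * ∑ t ∈ Finset.Icc 1 N, ‖E t‖)
    (U : ℝ) (hU : U = if lam ≤ 4 then 2 / lam else 1 / Real.sqrt lam)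
    (wstar : H) (hstar : ∀ v, P wstar ≤ P v) :
    (1 / (N : ℝ)) * ∑ t ∈ Finset.Icc 1 N, Pt t (w t)
      - (1 / (N : ℝ)) * ∑ t ∈ Finset.Icc 1 N, Pt t wstar
      ≤ (lam * U + 2) ^ 2 * (Real.log N + 1) / (2 * lam * N) + 2 * U * Ebar :=
  bsgd_regret_bound_general N φ y lam hlam hφ hy Pt hPt P hP η hη w E g hg hw1 hwrec hE Ebar hEbar U
    hU wstar hstar
end

section
/- Let H be a real inner product space, let N ≥ 1, and for each t ∈ {1,…,N} let φ_t ∈ H with ‖φ_t‖ ≤ 1 and y_t ∈ {−1, +1}. Let λ > 0 and η_t = 1/(λt). Let w_1 = 0 and w_{t+1} = w_t − η_t g_t + η_t E_t, where g_t = λw_t − (y_t φ_t if y_t⟨w_t, φ_t⟩ < 1, else 0) and E_t ∈ H with ‖E_t‖ ≤ 1. Then ‖w_t‖ ≤ 2/λ for all t ∈ {1,…,N+1}. -/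
open scoped RealInnerProductSpace

section SGDStep

variable {E : Type*} [NormedAddCommGroup E] [NormedSpace ℝ E]

lemma norm_ite_sign_smul_le_one (p : Prop) [Decidable p] {y : ℝ} {v : E}
    (hy : y = -1 ∨ y = 1) (hv : ‖v‖ ≤ 1) : ‖if p then y • v else 0‖ ≤ 1 := by
  split_ifs
  · rcases hy with rfl | rfl <;> simpa using hv
  · simp

/-- One step `w ↦ w - η (λ w - c) + η e` is the convex combination of `w` and `λ⁻¹ (c + e)`
with weight `η λ`, so it preserves every ball around the origin containing both points. -/
lemma norm_sgd_step_le {lam η R : ℝ} {w c e : E} (hlam : 0 < lam) (hη : 0 ≤ η)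
    (hηlam : η * lam ≤ 1) (hw : ‖w‖ ≤ R) (hce : ‖c + e‖ ≤ lam * R) :
    ‖w - η • (lam • w - c) + η • e‖ ≤ R := by
  have hstep : w - η • (lam • w - c) + η • e
      = (1 - η * lam) • w + (η * lam) • (lam⁻¹ • (c + e)) := by
    rw [smul_smul, mul_assoc, mul_inv_cancel₀ hlam.ne', mul_one, sub_smul, one_smul,
      smul_sub, smul_smul, smul_add]
    abel
  have hu : ‖lam⁻¹ • (c + e)‖ ≤ R := by
    rw [norm_smul, Real.norm_eq_abs, abs_inv, abs_of_pos hlam, inv_mul_le_iff₀ hlam]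
    exact hce
  rw [hstep, ← mem_closedBall_zero_iff]
  exact convex_closedBall 0 R (mem_closedBall_zero_iff.mpr hw) (mem_closedBall_zero_iff.mpr hu)
    (by linarith) (by positivity) (by ring)

end SGDStep

theorem bsgd_iterate_norm_bound_general
    {H : Type*} [NormedAddCommGroup H] [InnerProductSpace ℝ H]
    (N : ℕ)
    (φ : ℕ → H) (y : ℕ → ℝ) (lam : ℝ) (hlam : 0 < lam)
    (hφ : ∀ t, 1 ≤ t → t ≤ N → ‖φ t‖ ≤ 1)
    (hy : ∀ t, 1 ≤ t → t ≤ N → y t = -1 ∨ y t = 1)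
    (η : ℕ → ℝ) (hη : ∀ t, η t = 1 / (lam * t))
    (w : ℕ → H) (E : ℕ → H) (g : ℕ → H)
    (hg : ∀ t, 1 ≤ t → t ≤ N →
        g t = lam • w t - (if y t * ⟪w t, φ t⟫ < 1 then y t • φ t else 0))
    (hw1 : w 1 = 0)
    (hwrec : ∀ t, 1 ≤ t → t ≤ N → w (t + 1) = w t - η t • g t + η t • E t)
    (hE : ∀ t, 1 ≤ t → t ≤ N → ‖E t‖ ≤ 1) :
    ∀ t, 1 ≤ t → t ≤ N + 1 → ‖w t‖ ≤ 2 / lam := by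
  intro t ht
  induction t, ht using Nat.le_induction with
  | base => intro _; rw [hw1, norm_zero]; positivity
  | succ t ht ih =>
    intro htN
    have htN' : t ≤ N := by omega
    have htpos : (0 : ℝ) < t := by exact_mod_cast ht
    have hηlam : η t * lam = 1 / t := by rw [hη]; field_simp
    have hce : ‖(if y t * ⟪w t, φ t⟫ < 1 then y t • φ t else 0) + E t‖ ≤ lam * (2 / lam) := by
      rw [mul_div_cancel₀ _ hlam.ne']
      refine (norm_add_le _ _).trans ?_
      linarith [norm_ite_sign_smul_le_one (y t * ⟪w t, φ t⟫ < 1) (hy t ht htN') (hφ t ht htN'), hE t ht htN']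
    rw [hwrec t ht htN', hg t ht htN']
    refine norm_sgd_step_le hlam (by rw [hη]; positivity) ?_ (ih (by omega)) hce
    rw [hηlam, div_le_one htpos]
    exact_mod_cast ht

/-- The BSGD iterates with unit-bounded features and unit-bounded gradient
error stay in the ball of radius `2 / λ`. -/
theorem bsgd_iterate_norm_bound
    {H : Type*} [NormedAddCommGroup H] [InnerProductSpace ℝ H]
    (N : ℕ) (hN : 1 ≤ N)
    (φ : ℕ → H) (y : ℕ → ℝ) (lam : ℝ) (hlam : 0 < lam)
    (hφ : ∀ t, 1 ≤ t → t ≤ N → ‖φ t‖ ≤ 1)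
    (hy : ∀ t, 1 ≤ t → t ≤ N → y t = -1 ∨ y t = 1)
    (η : ℕ → ℝ) (hη : ∀ t, η t = 1 / (lam * t))
    (w : ℕ → H) (E : ℕ → H) (g : ℕ → H)
    (hg : ∀ t, 1 ≤ t → t ≤ N →
        g t = lam • w t - (if y t * ⟪w t, φ t⟫ < 1 then y t • φ t else 0))
    (hw1 : w 1 = 0)
    (hwrec : ∀ t, 1 ≤ t → t ≤ N → w (t + 1) = w t - η t • g t + η t • E t)
    (hE : ∀ t, 1 ≤ t → t ≤ N → ‖E t‖ ≤ 1) :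
    ∀ t, 1 ≤ t → t ≤ N + 1 → ‖w t‖ ≤ 2 / lam :=
  bsgd_iterate_norm_bound_general N φ y lam hlam hφ hy η hη w E g hg hw1 hwrec hE
end

section
/- Let d ≥ 1, γ > 0, x_i ≠ x_j points of ℝ^d (Euclidean space), and α_i, α_j ∈ ℝ with α_i ≠ 0 and α_j ≠ 0. Define m : ℝ^d → ℝ by m(z) = α_i·exp(−γ‖z − x_i‖²) + α_j·exp(−γ‖z − x_j‖²). If z ∈ ℝ^d is a critical point of m (i.e., the derivative of m at z is zero), then there exists h ∈ ℝ such that z = h·x_i + (1 − h)·x_j. -/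
/-!
The derivative of `w ↦ exp (-γ‖w - x‖²)` at `z` is `⟪-2γ exp (-γ‖z - x‖²) • (z - x), ·⟫`, so at a
critical point `z` of `m` some combination `a • (z - xᵢ) + b • (z - xⱼ)` vanishes, with
`a = -2γ αᵢ exp (-γ‖z - xᵢ‖²) ≠ 0`. If `a + b = 0` this says `a • (xⱼ - xᵢ) = 0`, impossible;
otherwise `z = (a • xᵢ + b • xⱼ) / (a + b)`.
-/

open Real

theorem exists_eq_smul_add_one_sub_smul_of_smul_sub_add_smul_sub_eq_zero
    {K V : Type*} [Field K] [AddCommGroup V] [Module K V] {a b : K} {x y z : V}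
    (ha : a ≠ 0) (hxy : x ≠ y) (h : a • (z - x) + b • (z - y) = 0) :
    ∃ t : K, z = t • x + (1 - t) • y := by
  have hab : a + b ≠ 0 := by
    intro hab
    have : a • (y - x) = 0 := by
      rw [← h, eq_neg_of_add_eq_zero_right hab]; module
    exact hxy (sub_eq_zero.mp (smul_eq_zero.mp this |>.resolve_left ha)).symm
  refine ⟨a / (a + b), ?_⟩
  have hz : (a + b) • z = a • x + b • y := by
    linear_combination (norm := module) h
  have h1 : 1 - a / (a + b) = b / (a + b) := by field_simp; ring
  rw [h1, div_eq_inv_mul, div_eq_inv_mul, mul_smul, mul_smul, ← smul_add, ← hz,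
    inv_smul_smul₀ hab]

theorem hasFDerivAt_exp_neg_mul_norm_sub_sq {E : Type*} [NormedAddCommGroup E]
    [InnerProductSpace ℝ E] (γ : ℝ) (x z : E) :
    HasFDerivAt (fun w => exp (-γ * ‖w - x‖ ^ 2))
      (innerSL ℝ ((-2 * γ * exp (-γ * ‖z - x‖ ^ 2)) • (z - x))) z := by
  have h := (((hasFDerivAt_id z).sub_const x).norm_sq.const_mul (-γ)).exp
  refine h.congr_fderiv ?_
  ext w
  simp only [smul_apply, ContinuousLinearMap.comp_apply,
    ContinuousLinearMap.id_apply, innerSL_apply_apply, real_inner_smul_left, smul_eq_mul,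
    id]
  ring

theorem gaussian_merge_critical_point_on_line_general
    (d : ℕ) (γ : ℝ) (hγ : 0 < γ)
    (xi xj : EuclideanSpace ℝ (Fin d)) (hx : xi ≠ xj)
    (αi αj : ℝ) (hαi : αi ≠ 0)
    (m : EuclideanSpace ℝ (Fin d) → ℝ)
    (hm : ∀ z, m z = αi * Real.exp (-γ * ‖z - xi‖ ^ 2)
        + αj * Real.exp (-γ * ‖z - xj‖ ^ 2))
    (z : EuclideanSpace ℝ (Fin d)) (hz : fderiv ℝ m z = 0) :
    ∃ h : ℝ, z = h • xi + (1 - h) • xj := by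
  set a := αi * (-2 * γ * exp (-γ * ‖z - xi‖ ^ 2))
  set b := αj * (-2 * γ * exp (-γ * ‖z - xj‖ ^ 2))
  have ha : a ≠ 0 := mul_ne_zero hαi (by have := exp_pos (-γ * ‖z - xi‖ ^ 2); nlinarith)
  have hderiv : HasFDerivAt m (innerSL ℝ (a • (z - xi) + b • (z - xj))) z := by
    rw [funext hm]
    refine (((hasFDerivAt_exp_neg_mul_norm_sub_sq γ xi z).const_mul αi).add
      ((hasFDerivAt_exp_neg_mul_norm_sub_sq γ xj z).const_mul αj)).congr_fderiv ?_
    simp only [map_add, map_smul, smul_smul, a, b]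
  have hcrit : a • (z - xi) + b • (z - xj) = 0 := by
    rw [← norm_eq_zero, ← innerSL_apply_norm ℝ, ← hderiv.fderiv, hz, norm_zero]
  exact exists_eq_smul_add_one_sub_smul_of_smul_sub_add_smul_sub_eq_zero ha hx hcrit

/-- Any critical point of `z ↦ αᵢ exp(-γ‖z-xᵢ‖²) + αⱼ exp(-γ‖z-xⱼ‖²)` lies on
the line through `xᵢ` and `xⱼ`. -/
theorem gaussian_merge_critical_point_on_line
    (d : ℕ) (hd : 1 ≤ d) (γ : ℝ) (hγ : 0 < γ)
    (xi xj : EuclideanSpace ℝ (Fin d)) (hx : xi ≠ xj)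
    (αi αj : ℝ) (hαi : αi ≠ 0) (hαj : αj ≠ 0)
    (m : EuclideanSpace ℝ (Fin d) → ℝ)
    (hm : ∀ z, m z = αi * Real.exp (-γ * ‖z - xi‖ ^ 2)
        + αj * Real.exp (-γ * ‖z - xj‖ ^ 2))
    (z : EuclideanSpace ℝ (Fin d)) (hz : fderiv ℝ m z = 0) :
    ∃ h : ℝ, z = h • xi + (1 - h) • xj :=
  gaussian_merge_critical_point_on_line_general d γ hγ xi xj hx αi αj hαi m hm z hz
end

section
/- Let d ≥ 1, γ > 0, x_i ≠ x_j points of ℝ^d (Euclidean space), and α_i > 0, α_j > 0. Define m : ℝ^d → ℝ by m(z) = α_i·exp(−γ‖z − x_i‖²) + α_j·exp(−γ‖z − x_j‖²). Then m attains a global maximum on ℝ^d, and every global maximizer z* of m has the form z* = h·x_i + (1 − h)·x_j for some h with 0 < h < 1. -/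
/-!
At a maximizer `z` the derivative of `m` vanishes. Writing `a = αᵢ k(xᵢ, z) > 0` and
`b = αⱼ k(xⱼ, z) > 0`, the gradient is `-2γ (a (z - xᵢ) + b (z - xⱼ))`, so
`z = (a / (a + b)) xᵢ + (b / (a + b)) xⱼ`. A maximizer exists because `m` is continuous,
positive, and tends to `0` at infinity.
-/

open Filter Real Topology

noncomputable def gaussianKernel {E : Type*} [NormedAddCommGroup E] (γ : ℝ) (x z : E) : ℝ :=
  exp (-γ * ‖z - x‖ ^ 2)

theorem Continuous.exists_forall_ge_of_tendsto_cocompact_zero {X : Type*} [TopologicalSpace X]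
    {f : X → ℝ} (hf : Continuous f) (hlim : Tendsto f (cocompact X) (𝓝 0)) {x₀ : X}
    (hx₀ : 0 < f x₀) : ∃ x, ∀ y, f y ≤ f x :=
  hf.exists_forall_ge' x₀ ((hlim.eventually_lt_const hx₀).mono fun _ h => h.le)

theorem eq_smul_add_one_sub_smul_of_smul_sub_add_smul_sub_eq_zero {V : Type*} [AddCommGroup V]
    [Module ℝ V] {a b : ℝ} (ha : 0 < a) (hb : 0 < b) {x y z : V}
    (h : a • (z - x) + b • (z - y) = 0) :
    z = (a / (a + b)) • x + (1 - a / (a + b)) • y := by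
  have hab : a + b ≠ 0 := by positivity
  have hz : (a + b) • z = a • x + b • y := by rw [← sub_eq_zero, ← h]; module
  calc z = (a + b)⁻¹ • ((a + b) • z) := (inv_smul_smul₀ hab z).symm
    _ = (a / (a + b)) • x + (b / (a + b)) • y := by
      rw [hz, smul_add, smul_smul, smul_smul, div_eq_inv_mul, div_eq_inv_mul]
    _ = _ := by rw [one_sub_div hab, add_sub_cancel_left]

section NormedAddCommGroup

variable {E : Type*} [NormedAddCommGroup E]

@[fun_prop]
theorem continuous_gaussianKernel (γ : ℝ) (x : E) : Continuous (gaussianKernel γ x) := by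
  unfold gaussianKernel; fun_prop

theorem gaussianKernel_pos (γ : ℝ) (x z : E) : 0 < gaussianKernel γ x z := exp_pos _

theorem tendsto_gaussianKernel_cocompact [ProperSpace E] {γ : ℝ} (hγ : 0 < γ) (x : E) :
    Tendsto (gaussianKernel γ x) (cocompact E) (𝓝 0) := by
  have hdist : Tendsto (fun z : E => ‖z - x‖) (cocompact E) atTop :=
    tendsto_norm_cocompact_atTop.comp (Homeomorph.subRight x).isClosedEmbedding.tendsto_cocompact
  exact tendsto_exp_atBot.comp <|
    ((tendsto_pow_atTop two_ne_zero).comp hdist).const_mul_atTop_of_neg (neg_lt_zero.2 hγ)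

theorem exists_forall_ge_gaussianKernel_pair [ProperSpace E] {γ αi αj : ℝ} (hγ : 0 < γ)
    (hαi : 0 < αi) (hαj : 0 < αj) (xi xj : E) :
    ∃ z, ∀ v, αi * gaussianKernel γ xi v + αj * gaussianKernel γ xj v
      ≤ αi * gaussianKernel γ xi z + αj * gaussianKernel γ xj z := by
  refine Continuous.exists_forall_ge_of_tendsto_cocompact_zero (x₀ := xi) (by fun_prop) ?_ ?_
  · simpa using ((tendsto_gaussianKernel_cocompact hγ xi).const_mul αi).add
      ((tendsto_gaussianKernel_cocompact hγ xj).const_mul αj)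
  · have := gaussianKernel_pos γ xi xi
    have := gaussianKernel_pos γ xj xi
    positivity

end NormedAddCommGroup

section InnerProductSpace

variable {E : Type*} [NormedAddCommGroup E] [InnerProductSpace ℝ E]

theorem hasFDerivAt_gaussianKernel (γ : ℝ) (x z : E) :
    HasFDerivAt (gaussianKernel γ x) ((-2 * γ * gaussianKernel γ x z) • innerSL ℝ (z - x)) z := by
  refine (((hasFDerivAt_id z).sub_const x).norm_sq.const_mul (-γ)).exp.congr_fderiv ?_
  ext v
  simp only [gaussianKernel, id_eq, ContinuousLinearMap.comp_id, smul_apply, innerSL_apply_apply,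
    smul_eq_mul, nsmul_eq_mul]
  ring

theorem hasFDerivAt_gaussianKernel_pair (γ αi αj : ℝ) (xi xj z : E) :
    HasFDerivAt (fun z => αi * gaussianKernel γ xi z + αj * gaussianKernel γ xj z)
      ((-2 * γ) • innerSL ℝ ((αi * gaussianKernel γ xi z) • (z - xi)
        + (αj * gaussianKernel γ xj z) • (z - xj))) z := by
  refine (((hasFDerivAt_gaussianKernel γ xi z).const_mul αi).add
    ((hasFDerivAt_gaussianKernel γ xj z).const_mul αj)).congr_fderiv ?_
  ext v
  simp only [add_apply, smul_apply, innerSL_apply_apply,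
    inner_add_left, real_inner_smul_left, smul_eq_mul]
  ring

theorem exists_eq_smul_add_one_sub_smul_of_isLocalMax_gaussianKernel_pair {γ αi αj : ℝ}
    (hγ : γ ≠ 0) (hαi : 0 < αi) (hαj : 0 < αj) {xi xj z : E}
    (hz : IsLocalMax (fun z => αi * gaussianKernel γ xi z + αj * gaussianKernel γ xj z) z) :
    ∃ h : ℝ, 0 < h ∧ h < 1 ∧ z = h • xi + (1 - h) • xj := by
  set a := αi * gaussianKernel γ xi z
  set b := αj * gaussianKernel γ xj z
  have ha : 0 < a := mul_pos hαi (gaussianKernel_pos γ xi z)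
  have hb : 0 < b := mul_pos hαj (gaussianKernel_pos γ xj z)
  have hcrit : a • (z - xi) + b • (z - xj) = 0 := by
    have h0 := hz.hasFDerivAt_eq_zero (hasFDerivAt_gaussianKernel_pair γ αi αj xi xj z)
    rwa [smul_eq_zero, or_iff_right (by simpa using hγ), ← norm_eq_zero, innerSL_apply_norm,
      norm_eq_zero] at h0
  refine ⟨a / (a + b), div_pos ha (add_pos ha hb), ?_,
    eq_smul_add_one_sub_smul_of_smul_sub_add_smul_sub_eq_zero ha hb hcrit⟩
  rw [div_lt_one (add_pos ha hb)]
  linarith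

end InnerProductSpace

theorem gaussian_merge_maximizer_strict_convex_combination_general
    (d : ℕ) (γ : ℝ) (hγ : 0 < γ)
    (xi xj : EuclideanSpace ℝ (Fin d))
    (αi αj : ℝ) (hαi : 0 < αi) (hαj : 0 < αj)
    (m : EuclideanSpace ℝ (Fin d) → ℝ)
    (hm : ∀ z, m z = αi * Real.exp (-γ * ‖z - xi‖ ^ 2)
        + αj * Real.exp (-γ * ‖z - xj‖ ^ 2)) :
    (∃ z : EuclideanSpace ℝ (Fin d), ∀ v, m v ≤ m z) ∧
    (∀ zstar : EuclideanSpace ℝ (Fin d), (∀ v, m v ≤ m zstar) →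
      ∃ h : ℝ, 0 < h ∧ h < 1 ∧ zstar = h • xi + (1 - h) • xj) := by
  obtain rfl : m = fun z => αi * gaussianKernel γ xi z + αj * gaussianKernel γ xj z := funext hm
  exact ⟨exists_forall_ge_gaussianKernel_pair hγ hαi hαj xi xj, fun _ hmax =>
    exists_eq_smul_add_one_sub_smul_of_isLocalMax_gaussianKernel_pair hγ.ne' hαi hαj
      (Eventually.of_forall hmax)⟩

/-- For positive coefficients, `z ↦ αᵢ exp(-γ‖z-xᵢ‖²) + αⱼ exp(-γ‖z-xⱼ‖²)`
attains a global maximum, and every global maximizer is a strict convex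
combination `h • xᵢ + (1-h) • xⱼ` with `0 < h < 1`. -/
theorem gaussian_merge_maximizer_strict_convex_combination
    (d : ℕ) (hd : 1 ≤ d) (γ : ℝ) (hγ : 0 < γ)
    (xi xj : EuclideanSpace ℝ (Fin d)) (hx : xi ≠ xj)
    (αi αj : ℝ) (hαi : 0 < αi) (hαj : 0 < αj)
    (m : EuclideanSpace ℝ (Fin d) → ℝ)
    (hm : ∀ z, m z = αi * Real.exp (-γ * ‖z - xi‖ ^ 2)
        + αj * Real.exp (-γ * ‖z - xj‖ ^ 2)) :
    (∃ z : EuclideanSpace ℝ (Fin d), ∀ v, m v ≤ m z) ∧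
    (∀ zstar : EuclideanSpace ℝ (Fin d), (∀ v, m v ≤ m zstar) →
      ∃ h : ℝ, 0 < h ∧ h < 1 ∧ zstar = h • xi + (1 - h) • xj) :=
  gaussian_merge_maximizer_strict_convex_combination_general d γ hγ xi xj αi αj hαi hαj m hm
end

section
/- Let d ≥ 1, γ > 0, x_i ≠ x_j points of ℝ^d (Euclidean space), and α_i > 0, α_j > 0. Define m : ℝ^d → ℝ by m(z) = α_i·exp(−γ‖z − x_i‖²) + α_j·exp(−γ‖z − x_j‖²). For any z ∈ ℝ^d, let p be the orthogonal projection of z onto the affine line {h·x_i + (1 − h)·x_j : h ∈ ℝ}. Then m(z) ≤ m(p), and the inequality is strict whenever z ≠ p. -/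
/-!
By Pythagoras, `‖z - x‖² = ‖z - p‖² + ‖p - x‖²` for both centres `x = xᵢ, xⱼ`, so
`m z = exp (-γ ‖z - p‖²) * m p`; the factor is at most `1`, and less than `1` when `z ≠ p`.
-/

open Real
open scoped RealInnerProductSpace

section

variable {E : Type*} [NormedAddCommGroup E] [InnerProductSpace ℝ E]

theorem exp_neg_mul_norm_sub_sq_eq_mul_of_inner_eq_zero (γ : ℝ) {z p v : E}
    (h : ⟪z - p, p - v⟫ = 0) :
    exp (-γ * ‖z - v‖ ^ 2) = exp (-γ * ‖z - p‖ ^ 2) * exp (-γ * ‖p - v‖ ^ 2) := by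
  have hpyth : ‖z - v‖ ^ 2 = ‖z - p‖ ^ 2 + ‖p - v‖ ^ 2 := by
    rw [← sub_add_sub_cancel z p v, norm_add_sq_real, h]; ring
  rw [hpyth, ← exp_add]; ring_nf

theorem two_gaussians_eq_mul_of_mem_line_of_inner_eq_zero (γ αi αj : ℝ) {xi xj z p : E}
    (hp_mem : ∃ h : ℝ, p = h • xi + (1 - h) • xj) (hp_perp : ⟪z - p, xi - xj⟫ = 0) :
    αi * exp (-γ * ‖z - xi‖ ^ 2) + αj * exp (-γ * ‖z - xj‖ ^ 2)
      = exp (-γ * ‖z - p‖ ^ 2)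
        * (αi * exp (-γ * ‖p - xi‖ ^ 2) + αj * exp (-γ * ‖p - xj‖ ^ 2)) := by
  obtain ⟨h, rfl⟩ := hp_mem
  have hperp_i : ⟪z - (h • xi + (1 - h) • xj), h • xi + (1 - h) • xj - xi⟫ = 0 := by
    rw [show h • xi + (1 - h) • xj - xi = (h - 1) • (xi - xj) by module,
      inner_smul_right, hp_perp, mul_zero]
  have hperp_j : ⟪z - (h • xi + (1 - h) • xj), h • xi + (1 - h) • xj - xj⟫ = 0 := by
    rw [show h • xi + (1 - h) • xj - xj = h • (xi - xj) by module,
      inner_smul_right, hp_perp, mul_zero]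
  rw [exp_neg_mul_norm_sub_sq_eq_mul_of_inner_eq_zero γ hperp_i,
    exp_neg_mul_norm_sub_sq_eq_mul_of_inner_eq_zero γ hperp_j]
  ring

end

theorem gaussian_merge_projection_increases_general
    (d : ℕ) (γ : ℝ) (hγ : 0 < γ)
    (xi xj : EuclideanSpace ℝ (Fin d))
    (αi αj : ℝ) (hαi : 0 < αi) (hαj : 0 < αj)
    (m : EuclideanSpace ℝ (Fin d) → ℝ)
    (hm : ∀ v, m v = αi * Real.exp (-γ * ‖v - xi‖ ^ 2)
        + αj * Real.exp (-γ * ‖v - xj‖ ^ 2))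
    (z p : EuclideanSpace ℝ (Fin d))
    -- `p` is the orthogonal projection of `z` onto the affine line
    -- `{h • xᵢ + (1-h) • xⱼ : h ∈ ℝ}`:
    (hp_mem : ∃ h : ℝ, p = h • xi + (1 - h) • xj)
    (hp_perp : ⟪z - p, xi - xj⟫ = 0) :
    m z ≤ m p ∧ (z ≠ p → m z < m p) := by
  have hfactor : m z = exp (-γ * ‖z - p‖ ^ 2) * m p := by
    rw [hm, hm, two_gaussians_eq_mul_of_mem_line_of_inner_eq_zero γ αi αj hp_mem hp_perp]
  have hmp : 0 < m p := by rw [hm]; positivity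
  refine ⟨?_, fun hne => ?_⟩
  · rw [hfactor]
    refine mul_le_of_le_one_left hmp.le (exp_le_one_iff.2 ?_)
    nlinarith [sq_nonneg ‖z - p‖]
  · have hdist : 0 < ‖z - p‖ ^ 2 := pow_pos (norm_sub_pos_iff.2 hne) 2
    rw [hfactor]
    exact mul_lt_of_lt_one_left hmp (exp_lt_one_iff.2 (by nlinarith))

/-- Projecting a candidate point onto the line through `xᵢ` and `xⱼ` cannot
decrease `m(z) = αᵢ exp(-γ‖z-xᵢ‖²) + αⱼ exp(-γ‖z-xⱼ‖²)` when both
coefficients are positive, and strictly increases it off the line. -/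
theorem gaussian_merge_projection_increases
    (d : ℕ) (hd : 1 ≤ d) (γ : ℝ) (hγ : 0 < γ)
    (xi xj : EuclideanSpace ℝ (Fin d)) (hx : xi ≠ xj)
    (αi αj : ℝ) (hαi : 0 < αi) (hαj : 0 < αj)
    (m : EuclideanSpace ℝ (Fin d) → ℝ)
    (hm : ∀ v, m v = αi * Real.exp (-γ * ‖v - xi‖ ^ 2)
        + αj * Real.exp (-γ * ‖v - xj‖ ^ 2))
    (z p : EuclideanSpace ℝ (Fin d))
    -- `p` is the orthogonal projection of `z` onto the affine line
    -- `{h • xᵢ + (1-h) • xⱼ : h ∈ ℝ}`: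
    (hp_mem : ∃ h : ℝ, p = h • xi + (1 - h) • xj)
    (hp_perp : ⟪z - p, xi - xj⟫ = 0) :
    m z ≤ m p ∧ (z ≠ p → m z < m p) :=
  gaussian_merge_projection_increases_general d γ hγ xi xj αi αj hαi hαj m hm z p hp_mem hp_perp
end
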